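/- arXiv:2005.09307 — 2 statements merged into one kernel-verified Lean document; each statement's English description precedes it below -/
import Mathlib

section
/- Let n ≥ 2 be an integer with k = ω(n). If N_k/φ(N_k) ≤ e^γ · log(log N_k), then σ(n)/n < e^γ · log(log n). -/
open Real Finset

/-- `Nk k` is the `k`-th primorial: the product of the first `k` primes
(`Nat.nth Nat.Prime i` is the `(i+1)`-st prime, so `Nat.nth Nat.Prime 0 = 2`). -/
noncomputable def Nk (k : ℕ) : ℕ := ∏ i ∈ Finset.range k, Nat.nth Nat.Prime i

/-- `M k = exp (e^(-γ) * N_k / φ(N_k)) - log N_k`. -/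
noncomputable def M (k : ℕ) : ℝ :=
  Real.exp (Real.exp (-Real.eulerMascheroniConstant) * (Nk k : ℝ) / (Nat.totient (Nk k) : ℝ))
    - Real.log (Nk k)

/-!
Since `σ(p^a) φ(p^a) = p^(2a) - p^(a-1)`, multiplicativity gives `σ(n)/n < n/φ(n)`, and
`n/φ(n) = ∏_{p ∣ n} (1 - 1/p)⁻¹`. If `n` has `k` prime factors, its `i`-th smallest one is at least
the `i`-th prime, so the first `k` primes maximise this product, giving `n/φ(n) ≤ N_k/φ(N_k)`, and
they also minimise the product of the primes, giving `N_k ≤ n`. The hypothesis and the monotonicity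
of `log ∘ log` conclude.
-/

open Nat
open scoped ArithmeticFunction.sigma

theorem sigma_one_mul_totient_prime_pow_lt {p a : ℕ} (hp : p.Prime) (ha : 0 < a) :
    σ 1 (p ^ a) * φ (p ^ a) < (p ^ a) ^ 2 := by
  obtain ⟨b, rfl⟩ : ∃ b, a = b + 1 := ⟨a - 1, by omega⟩
  obtain ⟨q, rfl⟩ : ∃ q, p = q + 1 := ⟨p - 1, by have := hp.pos; omega⟩
  rw [ArithmeticFunction.sigma_one_apply_prime_pow hp, totient_prime_pow hp ha,
    add_tsub_cancel_right, add_tsub_cancel_right]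
  have hgeom := geom_sum_mul_add q (b + 2)
  calc (∑ i ∈ range (b + 1 + 1), (q + 1) ^ i) * ((q + 1) ^ b * q)
      = ((∑ i ∈ range (b + 2), (q + 1) ^ i) * q) * (q + 1) ^ b := by ring
    _ < (q + 1) ^ (b + 2) * (q + 1) ^ b := by gcongr; omega
    _ = ((q + 1) ^ (b + 1)) ^ 2 := by ring

theorem sigma_one_mul_totient_lt_sq {n : ℕ} (hn : 2 ≤ n) : σ 1 n * φ n < n ^ 2 := by
  induction n using recOnPosPrimePosCoprime with
  | prime_pow p a hp ha => exact sigma_one_mul_totient_prime_pow_lt hp ha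
  | zero => omega
  | one => omega
  | coprime a b ha hb hab iha ihb =>
    rw [ArithmeticFunction.isMultiplicative_sigma.map_mul_of_coprime hab, totient_mul hab, mul_pow]
    calc σ 1 a * σ 1 b * (φ a * φ b) = (σ 1 a * φ a) * (σ 1 b * φ b) := by ring
      _ < a ^ 2 * b ^ 2 := Nat.mul_lt_mul'' (iha ha) (ihb hb)

theorem sigma_one_div_lt_div_totient {n : ℕ} (hn : 2 ≤ n) :
    (σ 1 n : ℝ) / n < n / φ n := by
  have hn0 : 0 < n := by omega
  rw [div_lt_div_iff₀ (by positivity) (by exact_mod_cast totient_pos.2 hn0), ← sq]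
  exact_mod_cast sigma_one_mul_totient_lt_sq hn

theorem totient_div_eq_prod_primeFactors {n : ℕ} (hn : n ≠ 0) :
    (φ n : ℝ) / n = ∏ p ∈ n.primeFactors, (1 - (p : ℝ)⁻¹) := by
  have := congrArg ((↑) : ℚ → ℝ) (totient_eq_mul_prod_factors n)
  push_cast at this
  rw [this, mul_div_cancel_left₀ _ (by exact_mod_cast hn)]

theorem prod_eq_prod_range_nth_mem {M : Type*} [CommMonoid M] (S : Finset ℕ) (f : ℕ → M) :
    ∏ x ∈ S, f x = ∏ i ∈ range #S, f (nth (· ∈ S) i) := by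
  have hfin : (Set.ofPred (· ∈ S)).Finite := S.finite_toSet
  have hcard : #hfin.toFinset = #S := by congr; ext; simp
  have himage : (range #S).image (nth (· ∈ S)) = S := by
    apply coe_injective
    rw [coe_image, coe_range, ← hcard, image_nth_Iio_card hfin]
    rfl
  have hinj : Set.InjOn (nth (· ∈ S)) (range #S) := by
    rw [coe_range, ← hcard]; exact nth_injOn hfin
  nth_rw 1 [← himage]
  exact prod_image hinj

theorem nth_mem_of_lt_card_finset {S : Finset ℕ} {i : ℕ} (hi : i < #S) : nth (· ∈ S) i ∈ S :=
  nth_mem_of_lt_card S.finite_toSet (by convert hi; ext; simp)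

theorem nth_prime_le_nth_mem {S : Finset ℕ} (hS : ∀ p ∈ S, p.Prime) {i : ℕ} (hi : i < #S) :
    nth Nat.Prime i ≤ nth (· ∈ S) i := by
  have hfin : (Set.ofPred (· ∈ S)).Finite := S.finite_toSet
  have hcard : i < #hfin.toFinset := by convert hi; ext; simp
  calc nth Nat.Prime i
      = nth Nat.Prime (count (· ∈ S) (nth (· ∈ S) i)) := by
        rw [count_nth_of_lt_card_finite hfin hcard]
    _ ≤ nth Nat.Prime (count Nat.Prime (nth (· ∈ S) i)) :=
        (nth_monotone infinite_setOfPred_prime) (count_mono_left fun p _ hp => hS p hp)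
    _ = nth (· ∈ S) i := nth_count (hS _ (nth_mem_of_lt_card_finset hi))

theorem prod_range_nth_prime_le_prod {R : Type*} [CommSemiring R] [PartialOrder R]
    [IsOrderedRing R] {S : Finset ℕ} (hS : ∀ p ∈ S, p.Prime) {f : ℕ → R}
    (hf₀ : ∀ p, p.Prime → 0 ≤ f p) (hf : MonotoneOn f (Set.ofPred Nat.Prime)) :
    ∏ i ∈ range #S, f (nth Nat.Prime i) ≤ ∏ p ∈ S, f p := by
  rw [prod_eq_prod_range_nth_mem S f]
  refine prod_le_prod (fun i _ => hf₀ _ (prime_nth_prime i)) fun i hi => ?_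
  have hi : i < #S := mem_range.1 hi
  exact hf (prime_nth_prime i) (hS _ (nth_mem_of_lt_card_finset hi)) (nth_prime_le_nth_mem hS hi)

theorem primeFactors_Nk (k : ℕ) : (Nk k).primeFactors = (range k).image (nth Nat.Prime) := by
  rw [Nk, ← prod_image (f := fun p => p) fun i _ j _ h => nth_injective infinite_setOfPred_prime h]
  exact primeFactors_prod fun p hp => by
    obtain ⟨i, -, rfl⟩ := mem_image.1 hp
    exact prime_nth_prime i

theorem Nk_pos (k : ℕ) : 0 < Nk k :=
  prod_pos fun i _ => (prime_nth_prime i).pos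

theorem one_lt_Nk {k : ℕ} (hk : k ≠ 0) : 1 < Nk k :=
  calc 1 < nth Nat.Prime 0 := (prime_nth_prime 0).one_lt
    _ ≤ Nk k := single_le_prod' (fun i _ => (prime_nth_prime i).one_lt.le)
        (mem_range.2 (pos_of_ne_zero hk))

theorem Nk_card_primeFactors_le {n : ℕ} (hn : n ≠ 0) : Nk #n.primeFactors ≤ n :=
  calc Nk #n.primeFactors ≤ ∏ p ∈ n.primeFactors, p :=
        prod_range_nth_prime_le_prod (fun _ => prime_of_mem_primeFactors) (fun _ _ => zero_le _)
          monotoneOn_id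
    _ ≤ n := le_of_dvd (pos_of_ne_zero hn) (prod_primeFactors_dvd n)

theorem div_totient_le_Nk_div_totient {n : ℕ} (hn : n ≠ 0) :
    (n : ℝ) / φ n ≤ Nk #n.primeFactors / φ (Nk #n.primeFactors) := by
  set k := #n.primeFactors
  rw [← inv_div (φ n : ℝ), ← inv_div (φ (Nk k) : ℝ)]
  refine inv_anti₀ ?_ ?_
  · exact div_pos (by exact_mod_cast totient_pos.2 (Nk_pos k)) (by exact_mod_cast Nk_pos k)
  rw [totient_div_eq_prod_primeFactors hn, totient_div_eq_prod_primeFactors (Nk_pos k).ne',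
    primeFactors_Nk,
    prod_image fun i _ j _ h => nth_injective infinite_setOfPred_prime h]
  refine prod_range_nth_prime_le_prod (f := fun p : ℕ => 1 - (p : ℝ)⁻¹)
    (fun _ => prime_of_mem_primeFactors) (fun p hp => ?_) fun p hp q _ hpq => ?_
  · exact sub_nonneg.2 (inv_le_one_of_one_le₀ (by exact_mod_cast hp.one_lt.le))
  · exact sub_le_sub_left (inv_anti₀ (by exact_mod_cast hp.pos) (by exact_mod_cast hpq)) 1

theorem robin_of_primorial_condition (n : ℕ) (hn : 2 ≤ n)
    (h : (Nk n.primeFactors.card : ℝ) / (Nat.totient (Nk n.primeFactors.card) : ℝ) ≤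
      Real.exp Real.eulerMascheroniConstant * Real.log (Real.log (Nk n.primeFactors.card))) :
    (ArithmeticFunction.sigma 1 n : ℝ) / n <
      Real.exp Real.eulerMascheroniConstant * Real.log (Real.log n) := by
  have hn₀ : n ≠ 0 := by omega
  have hk : n.primeFactors.card ≠ 0 := (nonempty_primeFactors.2 hn).card_pos.ne'
  calc (σ 1 n : ℝ) / n < n / φ n := sigma_one_div_lt_div_totient hn
    _ ≤ Nk n.primeFactors.card / φ (Nk n.primeFactors.card) := div_totient_le_Nk_div_totient hn₀
    _ ≤ exp eulerMascheroniConstant * Real.log (Real.log (Nk n.primeFactors.card)) := h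
    _ ≤ exp eulerMascheroniConstant * Real.log (Real.log n) := by
        have hNk := one_lt_Nk hk
        gcongr
        · exact log_pos (by exact_mod_cast hNk)
        · exact_mod_cast Nk_card_primeFactors_le hn₀
end

section
/- If every Hardy–Ramanujan number m > 5040 satisfies σ(m)/m < e^γ · log(log m), then every integer n > 5040 satisfies σ(n)/n < e^γ · log(log n). -/
/-!
Exchanging the exponents of two primes `p < q` so that the smaller prime carries the larger
exponent makes `n` smaller and does not decrease `σ(n)/n`: this is a rearrangement inequality for
truncated geometric series in `1/p` and `1/q` (with exponent `0` on `p`, the exchange replaces `q`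
by `p`). Iterating from `n` ends at some `m ≤ n` whose exponents are antitone along the primes,
i.e. a Hardy–Ramanujan number if `m ≥ 2`, with `σ(n)/n ≤ σ(m)/m`. If `m > 5040` the hypothesis
applies and `log ∘ log` is monotone. Otherwise a finite computation gives
`σ(n)/n ≤ 26/7 < e^γ log log 5040`: directly for `m < 5040`, and for `m = 5040`, where Robin's
inequality fails, by bounding the number one exchange before `5040`.
-/

open Real Finset

/-- A positive integer is a Hardy–Ramanujan number if it is of the form
`p_1^(a_1) * p_2^(a_2) * ⋯ * p_k^(a_k)` with `k ≥ 1` and `a_1 ≥ a_2 ≥ ⋯ ≥ a_k ≥ 1`,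
where `p_i` is the `i`-th prime. -/
def IsHardyRamanujan (n : ℕ) : Prop :=
  ∃ k : ℕ, ∃ a : ℕ → ℕ, 1 ≤ k ∧ (∀ i < k, 1 ≤ a i) ∧ (∀ i, i + 1 < k → a (i + 1) ≤ a i) ∧
    n = ∏ i ∈ Finset.range k, Nat.nth Nat.Prime i ^ a i

open scoped ArithmeticFunction.sigma

theorem pow_mul_pow_le_pow_mul_pow {R : Type*} [CommSemiring R] [PartialOrder R] [IsOrderedRing R]
    {x y : R} (hy : 0 ≤ y) (hyx : y ≤ x) {i j : ℕ} (hij : i ≤ j) :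
    x ^ i * y ^ j ≤ x ^ j * y ^ i := by
  obtain ⟨d, rfl⟩ := Nat.exists_eq_add_of_le hij
  calc x ^ i * y ^ (i + d) = (x ^ i * y ^ i) * y ^ d := by ring
    _ ≤ (x ^ i * y ^ i) * x ^ d := mul_le_mul_of_nonneg_left (pow_le_pow_left₀ hy hyx d)
        (mul_nonneg (pow_nonneg (hy.trans hyx) i) (pow_nonneg hy i))
    _ = x ^ (i + d) * y ^ i := by ring

theorem geom_sum_mul_geom_sum_le {R : Type*} [CommSemiring R] [PartialOrder R] [IsOrderedRing R]
    {x y : R} (hy : 0 ≤ y) (hyx : y ≤ x) {a b : ℕ} (hab : a ≤ b) :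
    (∑ i ∈ range (a + 1), x ^ i) * ∑ i ∈ range (b + 1), y ^ i ≤
      (∑ i ∈ range (b + 1), x ^ i) * ∑ i ∈ range (a + 1), y ^ i := by
  obtain ⟨d, rfl⟩ := Nat.exists_eq_add_of_le hab
  rw [show a + d + 1 = a + 1 + d by omega, sum_range_add (x ^ ·) (a + 1) d,
    sum_range_add (y ^ ·) (a + 1) d, mul_add, add_mul]
  gcongr _ + ?_
  rw [sum_mul_sum, sum_mul_sum, sum_comm]
  refine sum_le_sum fun i _ => sum_le_sum fun j hj => ?_
  exact pow_mul_pow_le_pow_mul_pow hy hyx (by have := mem_range.1 hj; omega)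

namespace Nat

theorem abundancyIndex_eq_sigma_div (n : ℕ) : n.abundancyIndex = (σ 1 n : ℚ) / n := by
  rw [abundancyIndex, ArithmeticFunction.sigma_one_apply]

theorem abundancyIndex_nonneg (n : ℕ) : 0 ≤ n.abundancyIndex := by
  rw [abundancyIndex]; positivity

theorem abundancyIndex_pos {n : ℕ} (hn : n ≠ 0) : 0 < n.abundancyIndex := by
  rw [abundancyIndex_eq_sigma_div]
  have : 0 < σ 1 n := ArithmeticFunction.sigma_pos_iff.2 (Nat.pos_of_ne_zero hn)
  positivity

theorem abundancyIndex_mul {m n : ℕ} (h : m.Coprime n) :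
    (m * n).abundancyIndex = m.abundancyIndex * n.abundancyIndex := by
  simp only [abundancyIndex_eq_sigma_div,
    ArithmeticFunction.isMultiplicative_sigma.map_mul_of_coprime h, cast_mul, mul_div_mul_comm]

theorem abundancyIndex_prime_pow {p : ℕ} (hp : p.Prime) (a : ℕ) :
    (p ^ a).abundancyIndex = ∑ i ∈ range (a + 1), ((p : ℚ)⁻¹) ^ i := by
  have hp0 : (p : ℚ) ≠ 0 := by exact_mod_cast hp.ne_zero
  rw [abundancyIndex_eq_sigma_div, ArithmeticFunction.sigma_one_apply_prime_pow hp, cast_pow,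
    div_eq_iff (pow_ne_zero _ hp0), sum_mul, ← sum_range_reflect]
  push_cast
  refine sum_congr rfl fun i hi => ?_
  rw [inv_pow, pow_sub₀ _ hp0 (Nat.lt_succ_iff.1 (mem_range.1 hi)), mul_comm]

theorem abundancyIndex_prime_pow_anti {p q : ℕ} (hp : p.Prime) (hq : q.Prime) (hpq : p ≤ q)
    (a : ℕ) : (q ^ a).abundancyIndex ≤ (p ^ a).abundancyIndex := by
  rw [abundancyIndex_prime_pow hp, abundancyIndex_prime_pow hq]
  gcongr
  exact_mod_cast hp.pos

theorem abundancyIndex_prime_pow_mul_le {p q : ℕ} (hp : p.Prime) (hq : q.Prime) (hpq : p ≤ q)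
    {a b : ℕ} (hab : a ≤ b) :
    (p ^ a).abundancyIndex * (q ^ b).abundancyIndex ≤
      (p ^ b).abundancyIndex * (q ^ a).abundancyIndex := by
  simp only [abundancyIndex_prime_pow hp, abundancyIndex_prime_pow hq]
  exact geom_sum_mul_geom_sum_le (by positivity) (inv_anti₀ (by exact_mod_cast hp.pos)
    (by exact_mod_cast hpq)) hab

theorem abundancyIndex_pow_mul_pow_mul {p q a b t : ℕ} (hp : p.Prime) (hq : q.Prime) (hpq : p ≠ q)
    (hpt : ¬ p ∣ t) (hqt : ¬ q ∣ t) :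
    (p ^ a * q ^ b * t).abundancyIndex =
      (p ^ a).abundancyIndex * (q ^ b).abundancyIndex * t.abundancyIndex := by
  have hpq' : (p ^ a).Coprime (q ^ b) := .pow _ _ ((coprime_primes hp hq).2 hpq)
  have hpt' : (p ^ a).Coprime t := .pow_left _ ((hp.coprime_iff_not_dvd).2 hpt)
  have hqt' : (q ^ b).Coprime t := .pow_left _ ((hq.coprime_iff_not_dvd).2 hqt)
  rw [abundancyIndex_mul (hpt'.mul_left hqt'), abundancyIndex_mul hpq']

theorem cast_abundancyIndex (n : ℕ) : (n.abundancyIndex : ℝ) = σ 1 n / n := by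
  rw [abundancyIndex_eq_sigma_div]
  push_cast
  rfl

theorem exists_eq_pow_mul_pow_mul {n p q : ℕ} (hn : n ≠ 0) (hp : p.Prime) (hq : q.Prime)
    (hpq : p ≠ q) :
    ∃ t, ¬ p ∣ t ∧ ¬ q ∣ t ∧ n = p ^ n.factorization p * q ^ n.factorization q * t := by
  set m := n / p ^ n.factorization p
  have hm : m ≠ 0 := (Nat.ordCompl_pos p hn).ne'
  have hmq : m.factorization q = n.factorization q := by
    rw [Nat.factorization_ordCompl, Finsupp.erase_ne hpq.symm]
  refine ⟨m / q ^ m.factorization q, fun hpt => Nat.not_dvd_ordCompl hp hn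
    (hpt.trans (Nat.div_dvd_of_dvd (Nat.ordProj_dvd m q))), Nat.not_dvd_ordCompl hq hm, ?_⟩
  rw [mul_assoc, ← hmq, Nat.ordProj_mul_ordCompl_eq_self, Nat.ordProj_mul_ordCompl_eq_self]

theorem factorization_pow_mul_pow_mul {p q a b t : ℕ} (hp : p.Prime) (hq : q.Prime)
    (hpq : p ≠ q) (hpt : ¬ p ∣ t) (hqt : ¬ q ∣ t) :
    (p ^ a * q ^ b * t).factorization p = a ∧ (p ^ a * q ^ b * t).factorization q = b := by
  have ht : t ≠ 0 := by rintro rfl; exact hpt (dvd_zero p)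
  rw [Nat.factorization_mul (by positivity [hp.ne_zero, hq.ne_zero]) ht,
    Nat.factorization_mul (pow_ne_zero _ hp.ne_zero) (pow_ne_zero _ hq.ne_zero),
    hp.factorization_pow, hq.factorization_pow]
  simp [hpq, hpq.symm, Nat.factorization_eq_zero_of_not_dvd hpt,
    Nat.factorization_eq_zero_of_not_dvd hqt]

theorem dvd_of_antitoneOn_factorization {n p q : ℕ}
    (h : AntitoneOn n.factorization {p | p.Prime}) (hn : n ≠ 0) (hp : p.Prime) (hq : q.Prime)
    (hpq : p ≤ q) (hqn : q ∣ n) : p ∣ n :=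
  (hp.dvd_iff_one_le_factorization hn).2
    (((hq.dvd_iff_one_le_factorization hn).1 hqn).trans (h hp hq hpq))

end Nat

def IsExponentSwap (n n' : ℕ) : Prop :=
  ∃ p q a b t, p.Prime ∧ q.Prime ∧ p < q ∧ a < b ∧ ¬ p ∣ t ∧ ¬ q ∣ t ∧
    n = p ^ a * q ^ b * t ∧ n' = p ^ b * q ^ a * t

namespace IsExponentSwap

variable {n n' : ℕ}

theorem ne_zero (h : IsExponentSwap n n') : n' ≠ 0 := by
  obtain ⟨p, q, a, b, t, hp, hq, -, -, hpt, -, -, rfl⟩ := h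
  have : t ≠ 0 := by rintro rfl; exact hpt (dvd_zero p)
  positivity [hp.ne_zero, hq.ne_zero]

theorem lt (h : IsExponentSwap n n') : n' < n := by
  obtain ⟨p, q, a, b, t, hp, hq, hpq, hab, hpt, -, rfl, rfl⟩ := h
  have ht : 0 < t := Nat.pos_of_ne_zero (by rintro rfl; exact hpt (dvd_zero p))
  obtain ⟨d, rfl⟩ := Nat.exists_eq_add_of_lt hab
  have hd : p ^ (d + 1) < q ^ (d + 1) := Nat.pow_lt_pow_left hpq (by omega)
  have hpa : 0 < p ^ a * q ^ a := by positivity [hp.pos, hq.pos]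
  calc p ^ (a + d + 1) * q ^ a * t = p ^ a * q ^ a * p ^ (d + 1) * t := by ring
    _ < p ^ a * q ^ a * q ^ (d + 1) * t := by gcongr
    _ = p ^ a * q ^ (a + d + 1) * t := by ring

theorem abundancyIndex_le (h : IsExponentSwap n n') :
    n.abundancyIndex ≤ n'.abundancyIndex := by
  obtain ⟨p, q, a, b, t, hp, hq, hpq, hab, hpt, hqt, rfl, rfl⟩ := h
  rw [Nat.abundancyIndex_pow_mul_pow_mul hp hq hpq.ne hpt hqt,
    Nat.abundancyIndex_pow_mul_pow_mul hp hq hpq.ne hpt hqt]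
  exact mul_le_mul_of_nonneg_right (Nat.abundancyIndex_prime_pow_mul_le hp hq hpq.le hab.le)
    (Nat.abundancyIndex_nonneg t)

end IsExponentSwap

theorem exists_isExponentSwap_of_not_antitoneOn {n : ℕ} (hn : n ≠ 0)
    (h : ¬ AntitoneOn n.factorization {p | p.Prime}) : ∃ n', IsExponentSwap n n' := by
  simp only [AntitoneOn, Set.mem_ofPred_eq, not_forall, not_le] at h
  obtain ⟨p, hp, q, hq, hpq, hlt⟩ := h
  have hpq : p < q := hpq.lt_of_ne (by rintro rfl; exact hlt.false)
  obtain ⟨t, hpt, hqt, hnt⟩ := Nat.exists_eq_pow_mul_pow_mul hn hp hq hpq.ne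
  exact ⟨_, p, q, _, _, t, hp, hq, hpq, hlt, hpt, hqt, hnt, rfl⟩

open Relation in
theorem exists_reflTransGen_isExponentSwap_antitoneOn {n : ℕ} (hn : n ≠ 0) :
    ∃ m, ReflTransGen IsExponentSwap n m ∧ AntitoneOn m.factorization {p | p.Prime} := by
  induction n using Nat.strong_induction_on with
  | _ n ih =>
  by_cases h : AntitoneOn n.factorization {p | p.Prime}
  · exact ⟨n, .refl, h⟩
  obtain ⟨n', hn'⟩ := exists_isExponentSwap_of_not_antitoneOn hn h
  obtain ⟨m, hm, hanti⟩ := ih n' hn'.lt hn'.ne_zero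
  exact ⟨m, .head hn' hm, hanti⟩

namespace Relation.ReflTransGen

variable {n m : ℕ}

theorem le_of_isExponentSwap (h : ReflTransGen IsExponentSwap n m) : m ≤ n := by
  induction h with
  | refl => rfl
  | tail _ hstep ih => exact hstep.lt.le.trans ih

theorem abundancyIndex_le_of_isExponentSwap (h : ReflTransGen IsExponentSwap n m) :
    n.abundancyIndex ≤ m.abundancyIndex := by
  induction h with
  | refl => rfl
  | tail _ hstep ih => exact ih.trans hstep.abundancyIndex_le

end Relation.ReflTransGen

theorem isHardyRamanujan_of_antitoneOn {n : ℕ} (hn : 2 ≤ n)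
    (h : AntitoneOn n.factorization {p | p.Prime}) : IsHardyRamanujan n := by
  classical
  have hn0 : n ≠ 0 := by omega
  have hinf := Nat.infinite_setOfPred_prime
  have hex : ∃ i, ¬ Nat.nth Nat.Prime i ∣ n := ⟨n, fun hd =>
    (Nat.le_of_dvd (by omega) hd).not_gt (by have := Nat.add_two_le_nth_prime n; omega)⟩
  set k := Nat.find hex
  have hdvd (i : ℕ) : Nat.nth Nat.Prime i ∣ n ↔ i < k :=
    ⟨fun hi => lt_of_not_ge fun hki => Nat.find_spec hex <|
      Nat.dvd_of_antitoneOn_factorization h hn0 (Nat.prime_nth_prime _) (Nat.prime_nth_prime _)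
        (Nat.nth_monotone hinf hki) hi,
     fun hi => not_not.1 (Nat.find_min hex hi)⟩
  have hsupp : n.factorization.support ⊆ (range k).image (Nat.nth Nat.Prime) := by
    intro p hp
    rw [Nat.support_factorization] at hp
    have hcount := Nat.nth_count (Nat.prime_of_mem_primeFactors hp)
    exact mem_image.2 ⟨Nat.count Nat.Prime p,
      mem_range.2 ((hdvd _).1 (hcount.symm ▸ Nat.dvd_of_mem_primeFactors hp)), hcount⟩
  have hprod : n = ∏ i ∈ range k, Nat.nth Nat.Prime i ^ n.factorization (Nat.nth Nat.Prime i) :=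
    calc n = n.factorization.prod (· ^ ·) := (Nat.prod_factorization_pow_eq_self hn0).symm
      _ = ∏ p ∈ (range k).image (Nat.nth Nat.Prime), p ^ n.factorization p :=
          Finsupp.prod_of_support_subset _ hsupp _ fun _ _ => pow_zero _
      _ = _ := prod_image fun i _ j _ hij => Nat.nth_injective hinf hij
  refine ⟨k, fun i => n.factorization (Nat.nth Nat.Prime i), ?_, fun i hi => ?_,
    fun i hi => ?_, hprod⟩
  · by_contra! hk
    rw [Nat.lt_one_iff.1 hk, range_zero, prod_empty] at hprod
    omega
  · exact (Nat.prime_nth_prime i).factorization_pos_of_dvd hn0 ((hdvd i).2 hi)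
  · exact h (Nat.prime_nth_prime _) (Nat.prime_nth_prime _) (Nat.nth_monotone hinf (by omega))

-- `σ` of the prime powers is spelled out as geometric sums, which the kernel evaluates cheaply.
set_option synthInstance.maxSize 2000 in
theorem seven_mul_geom_sums_le_of_lt_5040 :
    ∀ a < 13, ∀ b < a + 1, ∀ c < b + 1, ∀ d < c + 1, ∀ e < d + 1,
      2 ^ a * (3 ^ b * (5 ^ c * (7 ^ d * 11 ^ e))) < 5040 →
      7 * ((∑ i ∈ range (a + 1), 2 ^ i) * ((∑ i ∈ range (b + 1), 3 ^ i) *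
        ((∑ i ∈ range (c + 1), 5 ^ i) * ((∑ i ∈ range (d + 1), 7 ^ i) *
          ∑ i ∈ range (e + 1), 11 ^ i)))) ≤
        26 * (2 ^ a * (3 ^ b * (5 ^ c * (7 ^ d * 11 ^ e)))) := by
  decide

namespace Nat

theorem primeFactors_subset_of_antitoneOn {m : ℕ} (hm : m < 30030)
    (h : AntitoneOn m.factorization {p | p.Prime}) : m.primeFactors ⊆ {2, 3, 5, 7, 11} := by
  intro q hq
  obtain ⟨hq', hqm, hm0⟩ := Nat.mem_primeFactors.1 hq
  by_contra hq11
  have h13 : 13 ≤ q := le_of_not_gt fun hlt => hq11 <|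
    (by decide : ∀ q < 13, q.Prime → q ∈ ({2, 3, 5, 7, 11} : Finset ℕ)) q hlt hq'
  have hsub : ({2, 3, 5, 7, 11, 13} : Finset ℕ) ⊆ m.primeFactors := by
    intro r hr
    simp only [mem_insert, mem_singleton] at hr
    have hr' : r.Prime := by rcases hr with rfl | rfl | rfl | rfl | rfl | rfl <;> norm_num
    exact mem_primeFactors.2
      ⟨hr', dvd_of_antitoneOn_factorization h hm0 hr' hq' (by omega) hqm, hm0⟩
  have h30030 : 30030 ∣ m :=
    (prod_dvd_prod_of_subset _ _ id hsub).trans (Nat.prod_primeFactors_dvd m)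
  exact (Nat.le_of_dvd (Nat.pos_of_ne_zero hm0) h30030).not_gt hm

theorem abundancyIndex_le_of_antitoneOn_of_lt {m : ℕ} (hm : m < 5040)
    (h : AntitoneOn m.factorization {p | p.Prime}) : m.abundancyIndex ≤ 26 / 7 := by
  rcases eq_or_ne m 0 with rfl | hm0
  · norm_num [abundancyIndex]
  set v := m.factorization
  have hsupp : v.support ⊆ {2, 3, 5, 7, 11} := by
    rw [Nat.support_factorization]; exact Nat.primeFactors_subset_of_antitoneOn (by omega) h
  have hprod : m = ∏ p ∈ {2, 3, 5, 7, 11}, p ^ v p :=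
    (Nat.prod_factorization_pow_eq_self hm0).symm.trans
      (Finsupp.prod_of_support_subset _ hsupp _ fun _ _ => pow_zero _)
  have hsigma : σ 1 m = ∏ p ∈ {2, 3, 5, 7, 11}, ∑ i ∈ range (v p + 1), p ^ i := by
    rw [ArithmeticFunction.isMultiplicative_sigma.multiplicative_factorization _ hm0,
      Finsupp.prod_of_support_subset _ hsupp _ fun _ _ => by simp]
    refine prod_congr rfl fun p hp => ArithmeticFunction.sigma_one_apply_prime_pow ?_
    simp only [mem_insert, mem_singleton] at hp
    rcases hp with rfl | rfl | rfl | rfl | rfl <;> norm_num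
  have hanti {p q : ℕ} (hp : p.Prime := by norm_num) (hq : q.Prime := by norm_num)
      (hpq : p ≤ q := by norm_num) : v q < v p + 1 := Nat.lt_succ_of_le (h hp hq hpq)
  have hv2 : v 2 < 13 := by
    have := (Nat.ordProj_le 2 hm0).trans_lt (hm.trans (by norm_num : 5040 < 2 ^ 13))
    exact (Nat.pow_lt_pow_iff_right (by norm_num)).1 this
  simp only [prod_insert, mem_insert, mem_singleton, Nat.reduceEqDiff, or_self, not_false_eq_true,
    prod_singleton] at hprod hsigma
  have key := seven_mul_geom_sums_le_of_lt_5040 _ hv2 _ hanti _ hanti _ hanti _ hanti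
    (hprod ▸ hm)
  rw [← hsigma, ← hprod] at key
  rw [abundancyIndex_eq_sigma_div, div_le_div_iff₀ (by positivity) (by norm_num)]
  exact_mod_cast (by linarith : σ 1 m * 7 ≤ 26 * m)

theorem factorization_5040 :
    Nat.factorization 5040 =
      Finsupp.single 2 4 + Finsupp.single 3 2 + Finsupp.single 5 1 + Finsupp.single 7 1 := by
  rw [show 5040 = 2 ^ 4 * 3 ^ 2 * 5 ^ 1 * 7 ^ 1 by norm_num, Nat.factorization_mul (by norm_num)
    (by norm_num), Nat.factorization_mul (by norm_num) (by norm_num), Nat.factorization_mul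
    (by norm_num) (by norm_num), Nat.prime_two.factorization_pow, Nat.prime_three.factorization_pow,
    Nat.prime_five.factorization_pow, Nat.prime_seven.factorization_pow]

theorem primeFactors_5040 : Nat.primeFactors 5040 = {2, 3, 5, 7} := by
  simp [Nat.primeFactors, Nat.primeFactorsList_ofNat]

theorem abundancyIndex_5040 : (5040 : ℕ).abundancyIndex = 403 / 105 := by
  rw [show 5040 = 2 ^ 4 * 3 ^ 2 * 35 by norm_num, abundancyIndex_pow_mul_pow_mul prime_two
    prime_three (by norm_num) (by norm_num) (by norm_num), abundancyIndex_prime_pow prime_two,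
    abundancyIndex_prime_pow prime_three, abundancyIndex_eq_sigma_div,
    show σ 1 35 = 48 by decide]
  norm_num [sum_range_succ]

/-- `403 / 105` is the abundancy index of `5040`, so this bounds the number obtained from `5040` by
exchanging the exponents of `p` and `q`. -/
theorem abundancyIndex_exchange_le_of_5040 {p q a b : ℕ} (hp : p.Prime) (hq : q.Prime)
    (hpq : p < q) (hab : a < b) (hb : Nat.factorization 5040 p = b)
    (ha : Nat.factorization 5040 q = a) :
    403 / 105 * ((p ^ a).abundancyIndex * (q ^ b).abundancyIndex) ≤
      26 / 7 * ((p ^ b).abundancyIndex * (q ^ a).abundancyIndex) := by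
  have hmem (r : ℕ) : r ∈ ({2, 3, 5, 7} : Finset ℕ) ↔ Nat.factorization 5040 r ≠ 0 := by
    rw [← Nat.primeFactors_5040, ← Nat.support_factorization, Finsupp.mem_support_iff]
  have hp7 := (hmem p).2 (by omega)
  simp only [mem_insert, mem_singleton] at hp7
  by_cases hq7 : q ∈ ({2, 3, 5, 7} : Finset ℕ)
  · simp only [mem_insert, mem_singleton] at hq7
    simp only [abundancyIndex_prime_pow hp, abundancyIndex_prime_pow hq]
    rcases hp7 with rfl | rfl | rfl | rfl <;> rcases hq7 with rfl | rfl | rfl | rfl <;>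
      simp only [factorization_5040, Finsupp.coe_add, Pi.add_apply, Finsupp.single_apply,
        Nat.reduceEqDiff, ↓reduceIte, add_zero, zero_add] at hb ha <;>
      subst hb ha <;> first | omega | norm_num [sum_range_succ]
  · obtain rfl : a = 0 := ha ▸ not_not.1 (mt (hmem q).2 hq7)
    have hq11 : 11 ≤ q := le_of_not_gt fun hlt => hq7 <|
      (by decide : ∀ q < 11, q.Prime → q ∈ ({2, 3, 5, 7} : Finset ℕ)) q hlt hq
    refine (mul_le_mul_of_nonneg_left (mul_le_mul_of_nonneg_left
      (abundancyIndex_prime_pow_anti (by norm_num) hq hq11 b) (abundancyIndex_nonneg _))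
      (by norm_num)).trans ?_
    simp only [abundancyIndex_prime_pow hp, abundancyIndex_prime_pow hq,
      abundancyIndex_prime_pow (by norm_num : (11).Prime)]
    rcases hp7 with rfl | rfl | rfl | rfl <;>
      simp only [factorization_5040, Finsupp.coe_add, Pi.add_apply, Finsupp.single_apply,
        Nat.reduceEqDiff, ↓reduceIte, add_zero, zero_add] at hb <;>
      subst hb <;> norm_num [sum_range_succ]

end Nat

theorem abundancyIndex_le_of_isExponentSwap_5040 {n : ℕ} (h : IsExponentSwap n 5040) :
    n.abundancyIndex ≤ 26 / 7 := by
  obtain ⟨p, q, a, b, t, hp, hq, hpq, hab, hpt, hqt, rfl, h5040⟩ := h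
  obtain ⟨hb, ha⟩ := Nat.factorization_pow_mul_pow_mul (a := b) (b := a) hp hq hpq.ne hpt hqt
  rw [← h5040] at hb ha
  have hpos : 0 < (p ^ b).abundancyIndex * (q ^ a).abundancyIndex :=
    mul_pos (Nat.abundancyIndex_pos (pow_ne_zero _ hp.ne_zero))
      (Nat.abundancyIndex_pos (pow_ne_zero _ hq.ne_zero))
  -- `t` cancels: only the exponents of `p` and `q` in `5040` matter.
  rw [← mul_le_mul_iff_of_pos_right hpos]
  calc (p ^ a * q ^ b * t).abundancyIndex * ((p ^ b).abundancyIndex * (q ^ a).abundancyIndex)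
      = (5040 : ℕ).abundancyIndex * ((p ^ a).abundancyIndex * (q ^ b).abundancyIndex) := by
        rw [h5040, Nat.abundancyIndex_pow_mul_pow_mul hp hq hpq.ne hpt hqt,
          Nat.abundancyIndex_pow_mul_pow_mul hp hq hpq.ne hpt hqt]
        ring
    _ ≤ _ := by
        rw [Nat.abundancyIndex_5040]
        exact Nat.abundancyIndex_exchange_le_of_5040 hp hq hpq hab hb ha

theorem abundancyIndex_le_of_reflTransGen_of_le_5040 {n m : ℕ}
    (h : Relation.ReflTransGen IsExponentSwap n m) (hm : AntitoneOn m.factorization {p | p.Prime})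
    (hm5040 : m ≤ 5040) (hn : n ≠ 5040) : n.abundancyIndex ≤ 26 / 7 := by
  rcases hm5040.lt_or_eq with hlt | rfl
  · exact h.abundancyIndex_le_of_isExponentSwap.trans
      (Nat.abundancyIndex_le_of_antitoneOn_of_lt hlt hm)
  · obtain rfl | ⟨c, hnc, hc⟩ := h.cases_tail
    · exact absurd rfl hn
    · exact hnc.abundancyIndex_le_of_isExponentSwap.trans
        (abundancyIndex_le_of_isExponentSwap_5040 hc)

namespace Real

theorem eulerMascheroniConstant_gt_d2 : 0.56 < eulerMascheroniConstant := by
  have h := eulerMascheroniSeq_lt_eulerMascheroniConstant 31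
  have hH : (2517 / 625 : ℚ) ≤ harmonic 31 := by norm_num [harmonic_succ]
  rw [eulerMascheroniSeq, show ((31 : ℕ) : ℝ) + 1 = 2 ^ 5 by norm_num, log_pow] at h
  have hH' := (Rat.cast_le (K := ℝ)).2 hH
  rw [Rat.cast_div, Rat.cast_ofNat, Rat.cast_ofNat] at hH'
  push_cast at h
  linarith [log_two_lt_d9]

theorem exp_eulerMascheroniConstant_gt_d3 : 1.745 < exp eulerMascheroniConstant := by
  have h := sum_le_exp_of_nonneg (x := 0.56) (by norm_num) 4
  norm_num [sum_range_succ, Nat.factorial] at h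
  linarith [exp_lt_exp.2 eulerMascheroniConstant_gt_d2]

theorem log_log_gt_d2_of_5040_lt {x : ℝ} (hx : 5040 < x) : 2.13 < log (log x) := by
  have hlog2 := log_two_gt_d9
  have hlog : 8.5 < log x := by
    have h := one_sub_inv_le_log_of_pos (by norm_num : (0 : ℝ) < 5040 / 2 ^ 12)
    rw [log_div (by norm_num) (by norm_num), log_pow] at h
    norm_num at h
    linarith [log_lt_log (by norm_num) hx]
  have h := one_sub_inv_le_log_of_pos (by norm_num : (0 : ℝ) < 8.5 / 2 ^ 3)
  rw [log_div (by norm_num) (by norm_num), log_pow] at h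
  norm_num at h
  linarith [log_lt_log (by norm_num) hlog]

theorem div_lt_exp_eulerMascheroniConstant_mul_log_log {x : ℝ} (hx : 5040 < x) :
    26 / 7 < exp eulerMascheroniConstant * log (log x) :=
  calc (26 / 7 : ℝ) < 1.745 * 2.13 := by norm_num
    _ < _ := mul_lt_mul'' exp_eulerMascheroniConstant_gt_d3 (log_log_gt_d2_of_5040_lt hx)
      (by norm_num) (by norm_num)

end Real

theorem robin_of_hardyRamanujan_robin
    (H : ∀ m : ℕ, 5040 < m → IsHardyRamanujan m →
      (ArithmeticFunction.sigma 1 m : ℝ) / m <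
        Real.exp Real.eulerMascheroniConstant * Real.log (Real.log m)) :
    ∀ n : ℕ, 5040 < n →
      (ArithmeticFunction.sigma 1 n : ℝ) / n <
        Real.exp Real.eulerMascheroniConstant * Real.log (Real.log n) := by
  intro n hn
  obtain ⟨m, hnm, hm⟩ := exists_reflTransGen_isExponentSwap_antitoneOn (n := n) (by omega)
  rw [← Nat.cast_abundancyIndex]
  rcases le_or_gt m 5040 with hm5040 | hm5040
  · calc (n.abundancyIndex : ℝ) ≤ (26 / 7 : ℚ) := Rat.cast_le.2 <|
          abundancyIndex_le_of_reflTransGen_of_le_5040 hnm hm hm5040 (by omega)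
      _ = 26 / 7 := by norm_num
      _ < _ := Real.div_lt_exp_eulerMascheroniConstant_mul_log_log (by exact_mod_cast hn)
  · have hmn : (m : ℝ) ≤ n := by exact_mod_cast hnm.le_of_isExponentSwap
    calc (n.abundancyIndex : ℝ) ≤ m.abundancyIndex := by
          exact_mod_cast hnm.abundancyIndex_le_of_isExponentSwap
      _ < _ := by
          rw [Nat.cast_abundancyIndex]
          exact H m hm5040 (isHardyRamanujan_of_antitoneOn (by omega) hm)
      _ ≤ _ := by
          gcongr
          exact Real.log_pos (by exact_mod_cast (by omega : 1 < m))
end
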